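/- Let (W, g) be a finite-dimensional real vector space with a nondegenerate symmetric bilinear form g, T ⊂ W a hyperplane, ζ ∈ W \ T, and let (γ, ℓ, ℓ⁽²⁾) be the induced data on T with associated nondegenerate form 𝒜 on T × ℝ and inverse components (P, n, n⁽²⁾). Then the inverse metric g⁻¹ (the induced symmetric bilinear form on W*) decomposes as: g⁻¹(α, β) = P(α|_T, β|_T) + α(ζ)·β(n) + β(ζ)·α(n) + n⁽²⁾·α(ζ)·β(ζ) for all α, β ∈ W*, where n ∈ T is regarded as a vector of W. -/

import Mathlib

open Module

/-- The bilinear form `𝒜` on `V × ℝ` associated to metric hypersurface data `(γ, ℓ, ℓ⁽²⁾)`: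
`𝒜((X,a),(Y,b)) = γ(X,Y) + a·ℓ(Y) + b·ℓ(X) + a·b·ℓ⁽²⁾`. -/
noncomputable def Amap {V : Type*} [AddCommGroup V] [Module ℝ V]
    (γ : LinearMap.BilinForm ℝ V) (ℓ : Module.Dual ℝ V) (ℓ2 : ℝ) :
    LinearMap.BilinForm ℝ (V × ℝ) :=
  LinearMap.mk₂ ℝ
    (fun p q => γ p.1 q.1 + p.2 * ℓ q.1 + q.2 * ℓ p.1 + p.2 * q.2 * ℓ2)
    (fun p p' q => by simp [map_add, LinearMap.add_apply]; ring)
    (fun c p q => by simp [map_smul, LinearMap.smul_apply, smul_eq_mul]; ring)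
    (fun p q q' => by simp [map_add, LinearMap.add_apply]; ring)
    (fun c p q => by simp [map_smul, LinearMap.smul_apply, smul_eq_mul]; ring)

/-- The vector of `T` corresponding to `P(ρ,·) ∈ T**`, via the canonical
identification `T ≅ T**`. -/
noncomputable def Pvec {V : Type*} [AddCommGroup V] [Module ℝ V] [FiniteDimensional ℝ V]
    (P : LinearMap.BilinForm ℝ (Module.Dual ℝ V)) (ρ : Module.Dual ℝ V) : V :=
  (Module.evalEquiv ℝ V).symm (P ρ)

/-!
Since `ζ ∉ T` and `T` is a hyperplane, `(X, a) ↦ X + a ζ` identifies `T × ℝ` with `W`, and for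
symmetric `g` it pulls `g` back to `𝒜`. Put `ρ = β|_T` and `(x, c) = 𝒜⁻¹(ρ, β(ζ))`, i.e.
`x = P(ρ,·) + β(ζ) n` and `c = ρ(n) + β(ζ) n⁽²⁾`. Then `g(x + c ζ, Z + b ζ) = 𝒜((x, c), (Z, b)) =
ρ(Z) + b β(ζ) = β(Z + b ζ)`, so `x + c ζ = β♯` by nondegeneracy of `g`, and applying `α` to it
gives the formula.
-/

section Hyperplane

variable {K V M : Type*} [Field K] [AddCommGroup V] [Module K V] [AddCommGroup M] [Module K M]

theorem Submodule.sup_span_singleton_eq_top_of_finrank_add_one [FiniteDimensional K V]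
    {T : Submodule K V} {ζ : V} (hT : finrank K T + 1 = finrank K V) (hζ : ζ ∉ T) :
    T ⊔ Submodule.span K {ζ} = ⊤ :=
  Submodule.eq_top_of_finrank_eq ((Submodule.finrank_sup_span_singleton hζ).trans hT)

theorem LinearMap.ext_of_sup_span_singleton_eq_top {T : Submodule K V} {ζ : V}
    (hTζ : T ⊔ Submodule.span K {ζ} = ⊤) {f f' : V →ₗ[K] M}
    (hT : ∀ Z : T, f Z = f' Z) (hζ : f ζ = f' ζ) : f = f' := by
  refine LinearMap.ext_on (s := insert ζ (T : Set V)) ?_ ?_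
  · rw [Submodule.span_insert, Submodule.span_eq, sup_comm, hTζ]
  · rintro w (rfl | hw)
    · exact hζ
    · exact hT ⟨w, hw⟩

end Hyperplane

section InducedData

variable {V W : Type*} [AddCommGroup V] [Module ℝ V] [AddCommGroup W] [Module ℝ W]

@[simp]
theorem Amap_apply (γ : LinearMap.BilinForm ℝ V) (ℓ : Dual ℝ V) (ℓ2 : ℝ) (p q : V × ℝ) :
    Amap γ ℓ ℓ2 p q = γ p.1 q.1 + p.2 * ℓ q.1 + q.2 * ℓ p.1 + p.2 * q.2 * ℓ2 :=
  rfl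

theorem apply_Pvec [FiniteDimensional ℝ V] (P : LinearMap.BilinForm ℝ (Dual ℝ V))
    (ρ α : Dual ℝ V) : α (Pvec P ρ) = P ρ α :=
  apply_evalEquiv_symm_apply ℝ V α (P ρ)

theorem Amap_restrict_apply {g : LinearMap.BilinForm ℝ W} (hgsym : ∀ x y : W, g x y = g y x)
    (T : Submodule ℝ W) (ζ : W) (X Y : T) (a b : ℝ) :
    Amap (g.restrict T) ((g ζ).comp T.subtype) (g ζ ζ) (X, a) (Y, b) =
      g (X + a • ζ) (Y + b • ζ) := by
  simp only [Amap_apply, LinearMap.BilinForm.restrict_apply, LinearMap.domRestrict_apply,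
    LinearMap.comp_apply, Submodule.coe_subtype, map_add, map_smul, LinearMap.add_apply,
    LinearMap.smul_apply, smul_eq_mul, hgsym (X : W) ζ]
  ring

end InducedData

theorem inverse_metric_decomposition_general {W : Type*} [AddCommGroup W] [Module ℝ W]
    [FiniteDimensional ℝ W]
    (g : LinearMap.BilinForm ℝ W) (hgsym : ∀ x y : W, g x y = g y x)
    (hg : g.Nondegenerate)
    (T : Submodule ℝ W) (hT : Module.finrank ℝ T + 1 = Module.finrank ℝ W)
    (ζ : W) (hζ : ζ ∉ T)
    (P : LinearMap.BilinForm ℝ (Module.Dual ℝ T)) (hPsym : ∀ α β, P α β = P β α)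
    (n : T) (n2 : ℝ)
    (hinv : ∀ (α : Module.Dual ℝ T) (a : ℝ) (Z : T) (b : ℝ),
      Amap (g.restrict T) ((g ζ).comp T.subtype) (g ζ ζ)
        (Pvec P α + a • n, α n + a * n2) (Z, b) = α Z + a * b) :
    ∀ (α β : Module.Dual ℝ W) (y : W), g y = β →
      α y = P (α.comp T.subtype) (β.comp T.subtype)
        + α ζ * β (n : W) + β ζ * α (n : W) + n2 * (α ζ) * (β ζ) := by
  intro α β y hy
  set ρ : Dual ℝ T := β.comp T.subtype
  set x : T := Pvec P ρ + β ζ • n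
  set c : ℝ := ρ n + β ζ * n2
  have hsharp : g (x + c • ζ) = β := by
    refine LinearMap.ext_of_sup_span_singleton_eq_top
      (Submodule.sup_span_singleton_eq_top_of_finrank_add_one hT hζ) (fun Z => ?_) ?_
    · have h := hinv ρ (β ζ) Z 0
      rwa [Amap_restrict_apply hgsym, zero_smul, add_zero, mul_zero, add_zero] at h
    · have h := hinv ρ (β ζ) 0 1
      rwa [Amap_restrict_apply hgsym, Submodule.coe_zero, zero_add, one_smul, map_zero, zero_add,
        mul_one] at h
  have hy' : y = x + c • ζ := LinearMap.ker_eq_bot.mp hg.ker_eq_bot (hy.trans hsharp.symm)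
  have hαP : α ((Pvec P ρ : T) : W) = P (α.comp T.subtype) ρ := by
    rw [hPsym]
    exact apply_Pvec P ρ (α.comp T.subtype)
  rw [hy', map_add, map_smul, Submodule.coe_add, map_add, Submodule.coe_smul, map_smul, hαP]
  simp only [c, ρ, smul_eq_mul, LinearMap.comp_apply, Submodule.coe_subtype]
  ring

/-- For the data induced on a hyperplane `T ⊂ (W,g)` by a rigging `ζ`, with `(P, n, n⁽²⁾)`
the components of the inverse of `𝒜`: the inverse metric decomposes as
`g⁻¹(α,β) = P(α|_T, β|_T) + α(ζ)·β(n) + β(ζ)·α(n) + n⁽²⁾·α(ζ)·β(ζ)`, where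
`g⁻¹(α,β) = α(β♯)` and `β♯` is the unique vector with `g(β♯,·) = β`. -/
theorem inverse_metric_decomposition {W : Type*} [AddCommGroup W] [Module ℝ W]
    [FiniteDimensional ℝ W]
    (g : LinearMap.BilinForm ℝ W) (hgsym : ∀ x y : W, g x y = g y x)
    (hg : g.Nondegenerate)
    (T : Submodule ℝ W) (hT : Module.finrank ℝ T + 1 = Module.finrank ℝ W)
    (ζ : W) (hζ : ζ ∉ T)
    (hA : (Amap (g.restrict T) ((g ζ).comp T.subtype) (g ζ ζ)).Nondegenerate)
    (P : LinearMap.BilinForm ℝ (Module.Dual ℝ T)) (hPsym : ∀ α β, P α β = P β α)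
    (n : T) (n2 : ℝ)
    (hinv : ∀ (α : Module.Dual ℝ T) (a : ℝ) (Z : T) (b : ℝ),
      Amap (g.restrict T) ((g ζ).comp T.subtype) (g ζ ζ)
        (Pvec P α + a • n, α n + a * n2) (Z, b) = α Z + a * b) :
    ∀ (α β : Module.Dual ℝ W) (y : W), g y = β →
      α y = P (α.comp T.subtype) (β.comp T.subtype)
        + α ζ * β (n : W) + β ζ * α (n : W) + n2 * (α ζ) * (β ζ) :=
  inverse_metric_decomposition_general g hgsym hg T hT ζ hζ P hPsym n n2 hinv
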